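/- Let w be an infinite binary word with strictly increasing gap function. Then the first difference of the subword complexity satisfies 1 ≤ f_w(n+1) - f_w(n) ≤ ⌊n/2⌋ + 1 for all n ≥ 1. -/

import Mathlib

/-!
Over a binary alphabet, `f_w (n + 1) - f_w n` is the number of right special factors of
length `n`, since every factor has one or two right extensions. Because the gaps are unbounded,
`0ⁿ` is always right special. Because the gaps are pairwise distinct, the gap between two
consecutive `1`s of a factor determines where that factor occurs; so a factor with two `1`s
occurs only once and is not right special. A right special factor `0ʲ 1 0ⁿ⁻¹⁻ʲ` has an occurrence
followed by `1`, where the gaps around its `1` are `> j` and `= n - j`; as the gaps increase,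
`2 j + 2 ≤ n`, which leaves at most `n / 2` such factors.
-/

/-- `u` occurs in `w` starting at position `i` (positions are 1-indexed). -/
def FactorAt (w : ℕ → Fin 2) (i : ℕ) (u : List (Fin 2)) : Prop :=
  u = (List.range u.length).map (fun k => w (i + k))

/-- `u` is a subword (factor) of the infinite word `w`. -/
def IsFactor (w : ℕ → Fin 2) (u : List (Fin 2)) : Prop :=
  ∃ i, 1 ≤ i ∧ FactorAt w i u

/-- The subword complexity function of `w`. -/
noncomputable def complexity (w : ℕ → Fin 2) (n : ℕ) : ℕ :=
  Set.ncard {u : List (Fin 2) | u.length = n ∧ IsFactor w u}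

/-- `G` is the 1-distribution function of `w`: `G 0 = 0` and `G i` is the
position of the `i`-th `1` of `w` (positions 1-indexed). -/
def OneDistrib (w : ℕ → Fin 2) (G : ℕ → ℕ) : Prop :=
  G 0 = 0 ∧ StrictMono G ∧ ∀ p, 1 ≤ p → (w p = 1 ↔ ∃ i, 1 ≤ i ∧ G i = p)

/-- The gap function associated with a 1-distribution function `G`. -/
def gap (G : ℕ → ℕ) (i : ℕ) : ℕ := G i - G (i - 1)

/-- The gap function is strictly increasing. -/
def GapIncreasing (G : ℕ → ℕ) : Prop :=
  ∀ i, 1 ≤ i → gap G i < gap G (i + 1)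

/-- `u` is a right special factor of `w`. -/
def RightSpecial (w : ℕ → Fin 2) (u : List (Fin 2)) : Prop :=
  IsFactor w (u ++ [0]) ∧ IsFactor w (u ++ [1])

section Window

variable {w : ℕ → Fin 2}

def window (w : ℕ → Fin 2) (n i : ℕ) : List (Fin 2) :=
  (List.range n).map fun k => w (i + k)

lemma window_succ (w : ℕ → Fin 2) (n i : ℕ) :
    window w (n + 1) i = window w n i ++ [w (i + n)] := by
  simp [window, List.range_succ]

lemma factorAt_iff {i : ℕ} {u : List (Fin 2)} : FactorAt w i u ↔ u = window w u.length i :=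
  Iff.rfl

lemma isFactor_append_singleton_iff {v : List (Fin 2)} {b : Fin 2} :
    IsFactor w (v ++ [b]) ↔ ∃ i, 1 ≤ i ∧ v = window w v.length i ∧ w (i + v.length) = b := by
  refine exists_congr fun i => and_congr_right fun _ => ?_
  rw [factorAt_iff, List.length_append, List.length_singleton, window_succ,
    List.append_singleton_inj, eq_comm (a := b)]

lemma IsFactor.of_append_singleton {v : List (Fin 2)} {b : Fin 2} (h : IsFactor w (v ++ [b])) :
    IsFactor w v := by
  obtain ⟨i, hi, hv, -⟩ := isFactor_append_singleton_iff.1 h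
  exact ⟨i, hi, hv⟩

lemma IsFactor.exists_append_singleton {v : List (Fin 2)} (h : IsFactor w v) :
    ∃ b, IsFactor w (v ++ [b]) := by
  obtain ⟨i, hi, hv⟩ := h
  exact ⟨w (i + v.length), isFactor_append_singleton_iff.2 ⟨i, hi, hv, rfl⟩⟩

end Window

theorem complexity_succ (w : ℕ → Fin 2) (n : ℕ) :
    complexity w (n + 1) =
      complexity w n + {v : List (Fin 2) | v.length = n ∧ RightSpecial w v}.ncard := by
  set E : Fin 2 → Set (List (Fin 2)) := fun b => {v | v.length = n ∧ IsFactor w (v ++ [b])}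
  have hfin (b : Fin 2) : (E b).Finite := (List.finite_length_eq _ n).subset fun _ hv => hv.1
  have hsplit : {u : List (Fin 2) | u.length = n + 1 ∧ IsFactor w u} =
      (· ++ [0]) '' E 0 ∪ (· ++ [1]) '' E 1 := by
    ext u
    constructor
    · rintro ⟨hu, hf⟩
      obtain rfl | ⟨v, b, rfl⟩ := u.eq_nil_or_concat
      · simp at hu
      rw [List.concat_eq_append] at hu hf ⊢
      have hv : v.length = n := by simpa using hu
      obtain rfl | rfl : b = 0 ∨ b = 1 := by omega
      exacts [Or.inl ⟨v, ⟨hv, hf⟩, rfl⟩, Or.inr ⟨v, ⟨hv, hf⟩, rfl⟩]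
    · rintro (⟨v, ⟨hv, hf⟩, rfl⟩ | ⟨v, ⟨hv, hf⟩, rfl⟩) <;> exact ⟨by simp [hv], hf⟩
  have hdisj : Disjoint ((· ++ [0]) '' E 0) ((· ++ [1]) '' E 1) := by
    rw [Set.disjoint_left]
    rintro _ ⟨v, -, rfl⟩ ⟨v', -, h⟩
    simpa using congrArg List.getLast? h
  have hunion : E 0 ∪ E 1 = {v | v.length = n ∧ IsFactor w v} := by
    ext v
    constructor
    · rintro (⟨hv, hf⟩ | ⟨hv, hf⟩) <;> exact ⟨hv, hf.of_append_singleton⟩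
    · rintro ⟨hv, hf⟩
      obtain ⟨b, hb⟩ := hf.exists_append_singleton
      obtain rfl | rfl : b = 0 ∨ b = 1 := by omega
      exacts [Or.inl ⟨hv, hb⟩, Or.inr ⟨hv, hb⟩]
  have hinter : E 0 ∩ E 1 = {v | v.length = n ∧ RightSpecial w v} := by
    ext v
    exact ⟨fun ⟨⟨hv, h0⟩, _, h1⟩ => ⟨hv, h0, h1⟩, fun ⟨hv, h0, h1⟩ => ⟨⟨hv, h0⟩, hv, h1⟩⟩
  unfold complexity
  rw [hsplit, Set.ncard_union_eq hdisj ((hfin 0).image _) ((hfin 1).image _),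
    Set.ncard_image_of_injective _ (List.append_left_injective _),
    Set.ncard_image_of_injective _ (List.append_left_injective _),
    ← Set.ncard_union_add_ncard_inter _ _ (hfin 0) (hfin 1), hunion, hinter]

section OneDistrib

variable {w : ℕ → Fin 2} {G : ℕ → ℕ}

lemma gap_succ (G : ℕ → ℕ) (r : ℕ) : gap G (r + 1) = G (r + 1) - G r := rfl

lemma GapIncreasing.strictMonoOn (hg : GapIncreasing G) : StrictMonoOn (gap G) (Set.Ici 1) :=
  strictMonoOn_of_lt_add_one Set.ordConnected_Ici fun i _ hi _ => hg i hi

lemma GapIncreasing.le_gap (hmono : StrictMono G) (hg : GapIncreasing G) {i : ℕ} (hi : 1 ≤ i) :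
    i ≤ gap G i := by
  induction i, hi using Nat.le_induction with
  | base => have := hmono zero_lt_one; show 1 ≤ G 1 - G 0; omega
  | succ i hi ih => have := hg i hi; omega

lemma OneDistrib.apply_eq_one (hG : OneDistrib w G) {i : ℕ} (hi : 1 ≤ i) : w (G i) = 1 :=
  (hG.2.2 _ (hi.trans hG.2.1.le_apply)).2 ⟨i, hi, rfl⟩

lemma OneDistrib.exists_apply_eq (hG : OneDistrib w G) {q : ℕ} (hq : 1 ≤ q) (h : w q = 1) :
    ∃ i, 1 ≤ i ∧ G i = q :=
  (hG.2.2 q hq).1 h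

lemma OneDistrib.eq_zero_of_lt_of_lt (hG : OneDistrib w G) {r q : ℕ} (h₁ : G r < q)
    (h₂ : q < G (r + 1)) : w q = 0 := by
  by_contra h
  obtain ⟨i, -, rfl⟩ := hG.exists_apply_eq (q := q) (by omega) (by omega)
  have := hG.2.1.lt_iff_lt.1 h₁
  have := hG.2.1.lt_iff_lt.1 h₂
  omega

lemma OneDistrib.eq_apply_succ (hG : OneDistrib w G) {r q : ℕ} (hlt : G r < q) (hq : w q = 1)
    (hzero : ∀ x, G r < x → x < q → w x = 0) : q = G (r + 1) := by
  obtain ⟨i, -, rfl⟩ := hG.exists_apply_eq (by omega) hq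
  have hri : r < i := hG.2.1.lt_iff_lt.1 hlt
  obtain rfl | hi := eq_or_lt_of_le (Nat.succ_le_of_lt hri)
  · rfl
  · have := hzero (G (r + 1)) (hG.2.1 (lt_add_one r)) (hG.2.1 hi)
    rw [hG.apply_eq_one (by omega)] at this
    exact absurd this (by decide)

lemma OneDistrib.eq_of_agree_through_next_one (hG : OneDistrib w G) (hg : GapIncreasing G)
    {r r' : ℕ} (h : ∀ k ≤ gap G (r + 1), w (G r + k) = w (G r' + k)) : r = r' := by
  have hlt := hG.2.1 (lt_add_one r)
  have hnext : G r' + gap G (r + 1) = G (r' + 1) := by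
    refine hG.eq_apply_succ (by rw [gap_succ]; omega) ?_ fun x hx₁ hx₂ => ?_
    · rw [← h _ le_rfl, gap_succ, Nat.add_sub_cancel' hlt.le]
      exact hG.apply_eq_one (Nat.le_add_left 1 r)
    · obtain ⟨k, rfl⟩ := Nat.exists_eq_add_of_le hx₁.le
      rw [← h k (by omega)]
      exact hG.eq_zero_of_lt_of_lt (r := r) (by omega) (by rw [gap_succ] at hx₂; omega)
  have hgap : gap G (r + 1) = gap G (r' + 1) := by rw [gap_succ G r', ← hnext]; omega
  simpa using hg.strictMonoOn.injOn (Set.mem_Ici.2 (Nat.le_add_left 1 r))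
    (Set.mem_Ici.2 (Nat.le_add_left 1 r')) hgap

lemma OneDistrib.eq_of_agree_of_two_ones (hG : OneDistrib w G) (hg : GapIncreasing G)
    {n p p' i j : ℕ} (hp : 1 ≤ p) (hp' : 1 ≤ p') (hagree : ∀ k < n, w (p + k) = w (p' + k))
    (hij : i < j) (hjn : j < n) (hi : w (p + i) = 1) (hj : w (p + j) = 1) : p = p' := by
  obtain ⟨r, -, hr⟩ := hG.exists_apply_eq (by omega) hi
  obtain ⟨s, -, hs⟩ := hG.exists_apply_eq (by omega) hj
  obtain ⟨r', -, hr'⟩ := hG.exists_apply_eq (by omega) ((hagree i (by omega)).symm.trans hi)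
  have hrs : r + 1 ≤ s := hG.2.1.lt_iff_lt.1 (by omega)
  have hnext : G (r + 1) ≤ G s := hG.2.1.monotone hrs
  have hlt := hG.2.1 (lt_add_one r)
  have : r = r' := hG.eq_of_agree_through_next_one hg fun k hk => by
    rw [gap_succ] at hk
    rw [hr, hr', add_assoc, add_assoc]
    exact hagree _ (by omega)
  subst this
  omega

lemma OneDistrib.two_mul_add_two_le (hG : OneDistrib w G) (hg : GapIncreasing G)
    {n p j : ℕ} (hp : 1 ≤ p) (hjn : j < n) (hj : w (p + j) = 1)
    (hzero : ∀ k < n, k ≠ j → w (p + k) = 0) (hn : w (p + n) = 1) : 2 * j + 2 ≤ n := by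
  obtain ⟨m, hm, hGm⟩ := hG.exists_apply_eq (by omega) hj
  have hnext : p + n = G (m + 1) := hG.eq_apply_succ (by omega) hn fun x hx₁ hx₂ => by
    obtain ⟨k, rfl⟩ := Nat.exists_eq_add_of_le (show p ≤ x by omega)
    exact hzero k (by omega) (by omega)
  have hprev : G (m - 1) < p := by
    by_contra! h
    have hpos : 1 ≤ m - 1 := by
      by_contra h0
      rw [show m - 1 = 0 by omega, hG.1] at h
      omega
    have hlt : G (m - 1) < G m := hG.2.1 (by omega)
    obtain ⟨k, hk⟩ := Nat.exists_eq_add_of_le h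
    have := hzero k (by omega) (by omega)
    rw [← hk, hG.apply_eq_one hpos] at this
    exact absurd this (by decide)
  have hgap := hg m hm
  rw [gap_succ] at hgap
  unfold gap at hgap
  omega

lemma OneDistrib.rightSpecial_window (hG : OneDistrib w G) (hg : GapIncreasing G)
    {n p p' : ℕ} (hp : 1 ≤ p) (hp' : 1 ≤ p') (hagree : ∀ k < n, w (p + k) = w (p' + k))
    (h₁ : w (p + n) = 1) (h₀ : w (p' + n) = 0) :
    (∀ k < n, w (p + k) = 0) ∨
      ∃ j, 2 * j + 2 ≤ n ∧ ∀ k < n, w (p + k) = if k = j then 1 else 0 := by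
  by_cases hall : ∀ k < n, w (p + k) = 0
  · exact Or.inl hall
  push Not at hall
  obtain ⟨j, hjn, hj⟩ := hall
  replace hj : w (p + j) = 1 := by omega
  have hne : p ≠ p' := by
    rintro rfl
    rw [h₁] at h₀
    exact absurd h₀ (by decide)
  have hzero : ∀ k < n, k ≠ j → w (p + k) = 0 := by
    intro k hk hkj
    by_contra h
    replace h : w (p + k) = 1 := by omega
    rcases lt_or_gt_of_ne hkj with hlt | hlt
    · exact hne (hG.eq_of_agree_of_two_ones hg hp hp' hagree hlt hjn h hj)
    · exact hne (hG.eq_of_agree_of_two_ones hg hp hp' hagree hlt hk hj h)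
  refine Or.inr ⟨j, hG.two_mul_add_two_le hg hp hjn hj hzero h₁, fun k hk => ?_⟩
  split_ifs with hkj
  · exact hkj ▸ hj
  · exact hzero k hk hkj

lemma OneDistrib.rightSpecial_cases (hG : OneDistrib w G) (hg : GapIncreasing G)
    {v : List (Fin 2)} (hv : RightSpecial w v) :
    v = List.replicate v.length 0 ∨
      ∃ j, 2 * j + 2 ≤ v.length ∧
        v = (List.range v.length).map fun k => if k = j then 1 else 0 := by
  obtain ⟨p', hp', hv', hw₀⟩ := isFactor_append_singleton_iff.1 hv.1
  obtain ⟨p, hp, hv, hw₁⟩ := isFactor_append_singleton_iff.1 hv.2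
  have hagree : ∀ k < v.length, w (p + k) = w (p' + k) := fun k hk => by
    simpa [window] using List.getElem_of_eq (hv.symm.trans hv') (by simpa [window] using hk)
  rcases hG.rightSpecial_window hg hp hp' hagree hw₁ hw₀ with hzero | ⟨j, hj, hone⟩
  · refine Or.inl (List.eq_replicate_iff.2 ⟨rfl, ?_⟩)
    rw [hv]
    simp only [window, List.mem_map, List.mem_range]
    rintro _ ⟨k, hk, rfl⟩
    exact hzero k hk
  · refine Or.inr ⟨j, hj, ?_⟩
    rw [hv]
    simp only [window, List.length_map, List.length_range]
    exact List.map_congr_left fun k hk => hone k (List.mem_range.1 hk)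

lemma OneDistrib.ncard_rightSpecial_le (hG : OneDistrib w G) (hg : GapIncreasing G) (n : ℕ) :
    {v : List (Fin 2) | v.length = n ∧ RightSpecial w v}.ncard ≤ n / 2 + 1 := by
  set C : Finset (List (Fin 2)) := insert (List.replicate n 0)
    ((Finset.range (n / 2)).image fun j => (List.range n).map fun k => if k = j then 1 else 0)
  have hsub : {v : List (Fin 2) | v.length = n ∧ RightSpecial w v} ⊆ C := by
    rintro v ⟨rfl, hv⟩
    rw [Finset.mem_coe, Finset.mem_insert, Finset.mem_image]
    rcases hG.rightSpecial_cases hg hv with h | ⟨j, hj, h⟩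
    · exact Or.inl h
    · exact Or.inr ⟨j, Finset.mem_range.2 (by omega), h.symm⟩
  calc _ ≤ (C : Set (List (Fin 2))).ncard := Set.ncard_le_ncard hsub C.finite_toSet
    _ = C.card := Set.ncard_coe_finset C
    _ ≤ _ + 1 := Finset.card_insert_le _ _
    _ ≤ n / 2 + 1 := by grw [Finset.card_image_le, Finset.card_range]

lemma OneDistrib.rightSpecial_replicate_zero (hG : OneDistrib w G) (hg : GapIncreasing G)
    (n : ℕ) : RightSpecial w (List.replicate n 0) := by
  have hgap : n + 2 ≤ G (n + 2) - G (n + 1) := hg.le_gap hG.2.1 (by omega)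
  have hfactor : ∀ i, G (n + 1) < i → i + n ≤ G (n + 2) →
      IsFactor w (List.replicate n 0 ++ [w (i + n)]) := by
    intro i hi hin
    refine isFactor_append_singleton_iff.2 ⟨i, by omega, ?_, by simp⟩
    rw [List.length_replicate, eq_comm, List.eq_replicate_iff]
    refine ⟨by simp [window], ?_⟩
    simp only [window, List.mem_map, List.mem_range]
    rintro _ ⟨k, hk, rfl⟩
    exact hG.eq_zero_of_lt_of_lt (r := n + 1) (by omega) (show _ < G (n + 2) by omega)
  constructor
  · have h := hfactor (G (n + 2) - (n + 1)) (by omega) (by omega)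
    rwa [hG.eq_zero_of_lt_of_lt (r := n + 1) (by omega) (show _ < G (n + 2) by omega)] at h
  · have h := hfactor (G (n + 2) - n) (by omega) (by omega)
    rwa [show G (n + 2) - n + n = G (n + 2) by omega, hG.apply_eq_one (by omega)] at h

end OneDistrib

theorem stmt10_general (w : ℕ → Fin 2) (G : ℕ → ℕ) (hG : OneDistrib w G)
    (hg : GapIncreasing G) (n : ℕ) :
    complexity w n + 1 ≤ complexity w (n + 1) ∧
    complexity w (n + 1) ≤ complexity w n + (n / 2 + 1) := by
  have hspecial : {v : List (Fin 2) | v.length = n ∧ RightSpecial w v}.Nonempty :=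
    ⟨_, List.length_replicate, hG.rightSpecial_replicate_zero hg n⟩
  have hfinite : {v : List (Fin 2) | v.length = n ∧ RightSpecial w v}.Finite :=
    (List.finite_length_eq _ n).subset fun _ hv => hv.1
  rw [complexity_succ]
  exact ⟨Nat.add_le_add_left ((Set.ncard_pos hfinite).2 hspecial) _,
    Nat.add_le_add_left (hG.ncard_rightSpecial_le hg n) _⟩

theorem stmt10 (w : ℕ → Fin 2) (G : ℕ → ℕ) (hG : OneDistrib w G)
    (hg : GapIncreasing G) (n : ℕ) (hn : 1 ≤ n) :
    complexity w n + 1 ≤ complexity w (n + 1) ∧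
    complexity w (n + 1) ≤ complexity w n + (n / 2 + 1) :=
  stmt10_general w G hG hg n
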